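/- arXiv:2212.12711 — 5 statements merged into one kernel-verified Lean document; each statement's English description precedes it below -/
import Mathlib

section
/- Let A be an n×n Hermitian matrix with largest eigenvalue λₙ(A) and (n,n)-entry a_{n n̄}. Then λₙ(A) ≥ a_{n n̄}, and λₙ(A) ≤ a_{n n̄} + C/a_{n n̄} for a constant C depending only on the off-diagonal entries of the last row/column and the principal (n−1)×(n−1) block, provided a_{n n̄} is large enough. -/
/-!
Writing `A = U D Uᴴ` with `U` unitary, the diagonal entry `a = A (n, n)` is the convex combination
`∑ₖ λₖ |U (n, k)|²` of the eigenvalues, hence at most `λₙ`. For the upper bound,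
`λₙ² ≤ ∑ₖ λₖ² = ∑ᵢⱼ |Aᵢⱼ|² = a² + R`, where `R` is the Frobenius mass of the fixed
entries, so `λₙ ≤ √(a² + R) ≤ a + R / (2a)`.
-/

open Matrix Finset

theorem Matrix.sum_norm_sq_apply_of_mem_unitaryGroup {𝕜 n : Type*} [RCLike 𝕜] [Fintype n]
    [DecidableEq n] {U : Matrix n n 𝕜} (hU : U ∈ unitaryGroup n 𝕜) (i : n) :
    ∑ k, ‖U i k‖ ^ 2 = 1 := by
  have hii := congrFun (congrFun (mem_unitaryGroup_iff.mp hU) i) i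
  simp only [mul_apply, star_apply, RCLike.star_def, RCLike.mul_conj, one_apply_eq] at hii
  exact_mod_cast hii

theorem Matrix.sum_norm_sq_sub_norm_sq_apply_eq_of_eq_off_entry {α m : Type*} [Norm α]
    [Fintype m] [DecidableEq m] {M N : Matrix m m α} (p : m)
    (h : ∀ i j, i ≠ p ∨ j ≠ p → M i j = N i j) :
    ∑ i, ∑ j, ‖M i j‖ ^ 2 - ‖M p p‖ ^ 2 = ∑ i, ∑ j, ‖N i j‖ ^ 2 - ‖N p p‖ ^ 2 := by
  rw [sub_eq_sub_iff_sub_eq_sub, ← sum_sub_distrib, Fintype.sum_eq_single p, ← sum_sub_distrib,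
    Fintype.sum_eq_single p]
  · intro j hj
    rw [h p j (.inr hj), sub_self]
  · intro i hi
    rw [← sum_sub_distrib]
    exact sum_eq_zero fun j _ => by rw [h i j (.inl hi), sub_self]

theorem le_add_div_of_sq_le_sq_add {x a R : ℝ} (ha : 0 < a) (hR : 0 ≤ R)
    (h : x ^ 2 ≤ a ^ 2 + R) : x ≤ a + R / 2 / a := by
  rw [← sub_le_iff_le_add', le_div_iff₀ ha]
  rcases le_or_gt x a with hxa | hxa
  · nlinarith
  · nlinarith

namespace Matrix.IsHermitian

variable {𝕜 m : Type*} [RCLike 𝕜] [Fintype m] [DecidableEq m] {M : Matrix m m 𝕜}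
  (hM : M.IsHermitian)

theorem re_apply_self_eq_sum_eigenvalues_mul (i : m) :
    RCLike.re (M i i) =
      ∑ k, hM.eigenvalues k * ‖(hM.eigenvectorUnitary : Matrix m m 𝕜) i k‖ ^ 2 := by
  suffices M i i = ((∑ k, hM.eigenvalues k *
      ‖(hM.eigenvectorUnitary : Matrix m m 𝕜) i k‖ ^ 2 : ℝ) : 𝕜) by
    rw [this, RCLike.ofReal_re]
  conv_lhs => rw [hM.spectral_theorem, Unitary.conjStarAlgAut_apply, mul_apply]
  push_cast
  refine sum_congr rfl fun k _ => ?_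
  rw [mul_diagonal, star_apply, RCLike.star_def, mul_right_comm, RCLike.mul_conj, mul_comm]
  rfl

theorem re_apply_self_le_iSup_eigenvalues (i : m) :
    RCLike.re (M i i) ≤ ⨆ k, hM.eigenvalues k := by
  set U : Matrix m m 𝕜 := ↑hM.eigenvectorUnitary
  calc RCLike.re (M i i) = ∑ k, hM.eigenvalues k * ‖U i k‖ ^ 2 :=
        hM.re_apply_self_eq_sum_eigenvalues_mul i
    _ ≤ ∑ k, (⨆ l, hM.eigenvalues l) * ‖U i k‖ ^ 2 := by
        gcongr with k
        exact le_ciSup (Set.finite_range _).bddAbove k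
    _ = ⨆ k, hM.eigenvalues k := by
        rw [← mul_sum, sum_norm_sq_apply_of_mem_unitaryGroup hM.eigenvectorUnitary.2, mul_one]

theorem sum_sq_eigenvalues : ∑ k, hM.eigenvalues k ^ 2 = ∑ i, ∑ j, ‖M i j‖ ^ 2 := by
  have hsq : M * M = Unitary.conjStarAlgAut 𝕜 _ hM.eigenvectorUnitary
      (diagonal fun k => (hM.eigenvalues k : 𝕜) ^ 2) := by
    conv_lhs => rw [hM.spectral_theorem]
    rw [← map_mul, diagonal_mul_diagonal]
    simp [sq]
  have htrace : ((M * M).trace : 𝕜) = ∑ i, ∑ j, (‖M i j‖ ^ 2 : 𝕜) := by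
    refine sum_congr rfl fun i _ => sum_congr rfl fun j _ => ?_
    change M i j * M j i = _
    rw [← hM.apply j i, RCLike.star_def, RCLike.mul_conj]
  rw [hsq, Unitary.conjStarAlgAut_apply, trace_mul_cycle, Unitary.coe_star_mul_self, one_mul,
    trace_diagonal] at htrace
  exact_mod_cast htrace

theorem iSup_eigenvalues_sq_le [Nonempty m] :
    (⨆ k, hM.eigenvalues k) ^ 2 ≤ ∑ i, ∑ j, ‖M i j‖ ^ 2 := by
  obtain ⟨k, hk⟩ := exists_eq_ciSup_of_finite (f := hM.eigenvalues)
  rw [← hk, ← hM.sum_sq_eigenvalues]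
  exact single_le_sum (fun l _ => sq_nonneg (hM.eigenvalues l)) (mem_univ k)

end Matrix.IsHermitian

/-- For an Hermitian matrix whose entries are fixed except for the `(n,n)` diagonal entry `a`,
the largest eigenvalue satisfies `λₙ ≥ a`, and `λₙ ≤ a + C / a` for a constant `C`
(depending only on the fixed entries) once `a` is large enough. -/
theorem stmt7 (n : ℕ) (A : ℝ → Matrix (Fin (n + 1)) (Fin (n + 1)) ℂ)
    (hA : ∀ a, (A a).IsHermitian)
    (hdiag : ∀ a, A a (Fin.last n) (Fin.last n) = (a : ℂ))
    (hfixed : ∀ a b : ℝ, ∀ i j : Fin (n + 1),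
      i ≠ Fin.last n ∨ j ≠ Fin.last n → A a i j = A b i j) :
    (∀ a : ℝ, a ≤ ⨆ i, (hA a).eigenvalues i) ∧
      ∃ C > 0, ∃ a₀ : ℝ, ∀ a ≥ a₀, (⨆ i, (hA a).eigenvalues i) ≤ a + C / a := by
  refine ⟨fun a => by
    simpa [hdiag] using (hA a).re_apply_self_le_iSup_eigenvalues (Fin.last n), ?_⟩
  -- `A 0` vanishes at `(n, n)`, so `R` is the Frobenius mass of the fixed entries.
  set R := ∑ i, ∑ j, ‖A 0 i j‖ ^ 2
  have hfrobenius (a : ℝ) : ∑ i, ∑ j, ‖A a i j‖ ^ 2 = a ^ 2 + R := by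
    have := sum_norm_sq_sub_norm_sq_apply_eq_of_eq_off_entry (Fin.last n) (hfixed a 0)
    simp only [hdiag, Complex.ofReal_zero, norm_zero, Complex.norm_real, Real.norm_eq_abs,
      sq_abs] at this
    linarith
  refine ⟨R / 2 + 1, by positivity, 1, fun a ha => ?_⟩
  have ha₀ : 0 < a := by linarith
  calc (⨆ i, (hA a).eigenvalues i) ≤ a + R / 2 / a :=
        le_add_div_of_sq_le_sq_add ha₀ (by positivity)
          (hfrobenius a ▸ (hA a).iSup_eigenvalues_sq_le)
    _ ≤ a + (R / 2 + 1) / a := by gcongr; linarith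
end

section
/- On Γ = {λ ∈ ℝⁿ : 0 < Σᵢ arccot(λᵢ) < π/2}, the function F(λ) = cot(Σᵢ arccot(λᵢ)) is concave. -/
/-!
Write `p = cot (∑ i ∈ s, arccot λᵢ)` and `q = λₐ`. Adding the term `arccot q` gives, by the
addition formula for `cot`,
`cot (∑ i ∈ insert a s, arccot λᵢ) = (p q - 1) / (p + q) = q - (q ^ 2 + 1) / (p + q)`,
which on `p, q > 0` is jointly concave (a quadratic-over-linear function is convex) and increasing
in `p`. Hence concavity of `cot ∘ ∑ arccot` on its domain passes from `s` to `insert a s`; the new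
domain is the superlevel set `{(p q - 1) / (p + q) > 0}` of this concave function, hence convex.
The induction starts from a single term, where `cot (arccot λₐ) = λₐ` is linear.
-/

open Real

noncomputable def arccot (x : ℝ) : ℝ := π / 2 - arctan x

open Set

lemma arccot_pos (x : ℝ) : 0 < arccot x := by
  unfold arccot
  linarith [arctan_lt_pi_div_two x]

lemma arccot_lt_pi_div_two_iff {x : ℝ} : arccot x < π / 2 ↔ 0 < x := by
  unfold arccot
  rw [← arctan_pos]
  constructor <;> intro h <;> linarith

lemma sin_arccot (x : ℝ) : sin (arccot x) = cos (arctan x) :=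
  sin_pi_div_two_sub _

lemma cos_arccot (x : ℝ) : cos (arccot x) = x * sin (arccot x) := by
  rw [arccot, cos_pi_div_two_sub, sin_pi_div_two_sub, sin_arctan, cos_arctan, mul_one_div]

lemma cot_pos_iff_lt_pi_div_two {x : ℝ} (h0 : 0 < x) (hπ : x < π) :
    0 < cot x ↔ x < π / 2 := by
  rw [cot_eq_cos_div_sin, div_pos_iff_of_pos_right (sin_pos_of_pos_of_lt_pi h0 hπ)]
  constructor
  · intro h
    by_contra! hx
    linarith [cos_nonpos_of_pi_div_two_le_of_le hx (by linarith)]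
  · intro h
    exact cos_pos_of_mem_Ioo ⟨by linarith, h⟩

lemma sin_arccot_pos (x : ℝ) : 0 < sin (arccot x) := by
  rw [sin_arccot]
  exact cos_arctan_pos x

lemma cot_arccot (x : ℝ) : cot (arccot x) = x := by
  rw [cot_eq_cos_div_sin, cos_arccot, mul_div_cancel_right₀ _ (sin_arccot_pos x).ne']

lemma cot_add_arccot {β : ℝ} (hβ : sin β ≠ 0) (q : ℝ) :
    cot (β + arccot q) = (cot β * q - 1) / (cot β + q) := by
  have hγ := (sin_arccot_pos q).ne'
  rw [cot_eq_cos_div_sin, cos_add, sin_add, cos_arccot,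
    ← div_div_div_cancel_right₀ (mul_ne_zero hβ hγ), cot_eq_cos_div_sin]
  congr 1 <;> field_simp; ring

/-- Convexity of the quadratic-over-linear function `(x, s) ↦ x ^ 2 / s` on `s > 0`. -/
lemma sq_add_div_add_le {x y s t a b : ℝ} (hs : 0 < s) (ht : 0 < t) (ha : 0 ≤ a) (hb : 0 ≤ b) :
    (a * x + b * y) ^ 2 / (a * s + b * t) ≤ a * (x ^ 2 / s) + b * (y ^ 2 / t) := by
  rcases (add_nonneg (mul_nonneg ha hs.le) (mul_nonneg hb ht.le)).eq_or_lt with h | h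
  · rw [← h, div_zero]
    positivity
  obtain ⟨u, rfl⟩ : ∃ u, x = s * u := ⟨x / s, by field_simp⟩
  obtain ⟨v, rfl⟩ : ∃ v, y = t * v := ⟨y / t, by field_simp⟩
  have hu : (s * u) ^ 2 / s = s * u ^ 2 := by field_simp
  have hv : (t * v) ^ 2 / t = t * v ^ 2 := by field_simp
  rw [div_le_iff₀ h, hu, hv]
  nlinarith [mul_nonneg (mul_nonneg (mul_nonneg ha hb) (mul_nonneg hs.le ht.le))
    (sq_nonneg (u - v))]

lemma mul_sub_one_div_add_eq_sub (p q : ℝ) (h : p + q ≠ 0) :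
    (p * q - 1) / (p + q) = q - (q ^ 2 + 1) / (p + q) := by
  field_simp
  ring

lemma concaveOn_mul_sub_one_div_add :
    ConcaveOn ℝ (Ioi 0 ×ˢ Ioi 0) fun z : ℝ × ℝ => (z.1 * z.2 - 1) / (z.1 + z.2) := by
  refine ⟨(convex_Ioi 0).prod (convex_Ioi 0), ?_⟩
  rintro ⟨p, q⟩ ⟨hp, hq⟩ ⟨p', q'⟩ ⟨hp', hq'⟩ a b ha hb hab
  simp only [mem_Ioi] at hp hq hp' hq'
  have hs : 0 < p + q := by linarith
  have hs' : 0 < p' + q' := by linarith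
  have hmix : 0 < a * p + b * p' + (a * q + b * q') := by
    have hmp : 0 < a * p + b * p' := by simpa using (convex_Ioi (0 : ℝ)) hp hp' ha hb hab
    have hmq : 0 < a * q + b * q' := by simpa using (convex_Ioi (0 : ℝ)) hq hq' ha hb hab
    positivity
  simp only [Prod.smul_mk, Prod.mk_add_mk, smul_eq_mul]
  rw [mul_sub_one_div_add_eq_sub _ _ hs.ne', mul_sub_one_div_add_eq_sub _ _ hs'.ne',
    mul_sub_one_div_add_eq_sub _ _ hmix.ne']
  have hsq := sq_add_div_add_le (x := q) (y := q') hs hs' ha hb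
  have hone := sq_add_div_add_le (x := 1) (y := 1) hs hs' ha hb
  rw [mul_one, mul_one, hab] at hone
  rw [show a * (p + q) + b * (p' + q') = a * p + b * p' + (a * q + b * q') by ring] at hsq hone
  rw [add_div _ 1, add_div _ 1, add_div _ 1]
  linarith

lemma mul_sub_one_div_add_le_of_le {p p' q : ℝ} (hp : 0 < p) (hq : 0 < q) (hpp' : p ≤ p') :
    (p * q - 1) / (p + q) ≤ (p' * q - 1) / (p' + q) := by
  rw [mul_sub_one_div_add_eq_sub _ _ (by linarith), mul_sub_one_div_add_eq_sub _ _ (by linarith)]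
  gcongr

theorem ConcaveOn.comp_of_monotone_fst {E : Type*} [AddCommGroup E] [Module ℝ E]
    {s : Set E} {t : Set (ℝ × ℝ)} {h : ℝ × ℝ → ℝ} {f : E → ℝ} (g : E →ₗ[ℝ] ℝ)
    (hh : ConcaveOn ℝ t h)
    (hh_mono : ∀ ⦃p p' q⦄, (p, q) ∈ t → p ≤ p' → h (p, q) ≤ h (p', q))
    (hf : ConcaveOn ℝ s f) (hmaps : ∀ x ∈ s, (f x, g x) ∈ t) :
    ConcaveOn ℝ s fun x => h (f x, g x) := by
  refine ⟨hf.1, fun x hx y hy a b ha hb hab => ?_⟩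
  have hmix : (a * f x + b * f y, g (a • x + b • y)) ∈ t := by
    simpa using hh.1 (hmaps x hx) (hmaps y hy) ha hb hab
  calc a • h (f x, g x) + b • h (f y, g y) ≤ h (a • (f x, g x) + b • (f y, g y)) :=
        hh.2 (hmaps x hx) (hmaps y hy) ha hb hab
    _ = h (a * f x + b * f y, g (a • x + b • y)) := by simp
    _ ≤ h (f (a • x + b • y), g (a • x + b • y)) := hh_mono hmix (hf.2 hx hy ha hb hab)

section

variable {ι : Type*}

lemma sum_arccot_pos {s : Finset ι} (hs : s.Nonempty) (x : ι → ℝ) :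
    0 < ∑ i ∈ s, arccot (x i) :=
  Finset.sum_pos (fun i _ => arccot_pos (x i)) hs

lemma cot_sum_arccot_pos {s : Finset ι} (hs : s.Nonempty) {x : ι → ℝ}
    (hx : ∑ i ∈ s, arccot (x i) < π / 2) : 0 < cot (∑ i ∈ s, arccot (x i)) :=
  (cot_pos_iff_lt_pi_div_two (sum_arccot_pos hs x) (by linarith [pi_pos])).2 hx

lemma cot_sum_cons_arccot {s : Finset ι} (hs : s.Nonempty) {a : ι} (ha : a ∉ s) {x : ι → ℝ}
    (hx : ∑ i ∈ s, arccot (x i) < π / 2) :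
    cot (∑ i ∈ Finset.cons a s ha, arccot (x i)) =
      (cot (∑ i ∈ s, arccot (x i)) * x a - 1) / (cot (∑ i ∈ s, arccot (x i)) + x a) := by
  rw [Finset.sum_cons, add_comm, cot_add_arccot]
  exact (sin_pos_of_pos_of_lt_pi (sum_arccot_pos hs x) (by linarith [pi_pos])).ne'

lemma sum_cons_arccot_lt_pi_div_two_iff {s : Finset ι} (hs : s.Nonempty) {a : ι} (ha : a ∉ s)
    (x : ι → ℝ) :
    ∑ i ∈ Finset.cons a s ha, arccot (x i) < π / 2 ↔
      (∑ i ∈ s, arccot (x i) < π / 2 ∧ 0 < x a) ∧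
        0 < (cot (∑ i ∈ s, arccot (x i)) * x a - 1) / (cot (∑ i ∈ s, arccot (x i)) + x a) := by
  have hΘ := sum_arccot_pos hs x
  have hθ := arccot_pos (x a)
  constructor
  · intro h
    rw [Finset.sum_cons] at h
    have hβ : ∑ i ∈ s, arccot (x i) < π / 2 := by linarith
    have hxa : 0 < x a := arccot_lt_pi_div_two_iff.1 (by linarith)
    refine ⟨⟨hβ, hxa⟩, ?_⟩
    rw [← cot_sum_cons_arccot hs ha hβ, Finset.sum_cons]
    exact (cot_pos_iff_lt_pi_div_two (by linarith) (by linarith)).2 h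
  · rintro ⟨⟨hβ, hxa⟩, hcot⟩
    have hθ' := arccot_lt_pi_div_two_iff.2 hxa
    rw [← cot_sum_cons_arccot hs ha hβ] at hcot
    rw [Finset.sum_cons] at hcot ⊢
    exact (cot_pos_iff_lt_pi_div_two (by linarith) (by linarith)).1 hcot

theorem concaveOn_cot_sum_arccot {s : Finset ι} (hs : s.Nonempty) :
    ConcaveOn ℝ {x : ι → ℝ | ∑ i ∈ s, arccot (x i) < π / 2}
      fun x => cot (∑ i ∈ s, arccot (x i)) := by
  induction hs using Finset.Nonempty.cons_induction with
  | singleton a =>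
    have hset : {x : ι → ℝ | ∑ i ∈ {a}, arccot (x i) < π / 2} = {x | 0 < x a} := by
      ext x
      simp [arccot_lt_pi_div_two_iff]
    rw [hset]
    refine ((LinearMap.proj a : (ι → ℝ) →ₗ[ℝ] ℝ).concaveOn
      (convex_halfSpace_gt (LinearMap.proj a).isLinear 0)).congr fun x _ => ?_
    simp [cot_arccot]
  | cons a s ha hs ih =>
    set D := {x : ι → ℝ | ∑ i ∈ s, arccot (x i) < π / 2} ∩ {x | 0 < x a}
    set G := fun x : ι → ℝ =>
      (cot (∑ i ∈ s, arccot (x i)) * x a - 1) / (cot (∑ i ∈ s, arccot (x i)) + x a)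
    have hD : Convex ℝ D := ih.1.inter (convex_halfSpace_gt (LinearMap.proj a).isLinear 0)
    have hG : ConcaveOn ℝ D G :=
      concaveOn_mul_sub_one_div_add.comp_of_monotone_fst (LinearMap.proj a)
        (fun _ _ _ hpq hpp' => mul_sub_one_div_add_le_of_le hpq.1 hpq.2 hpp')
        (ih.subset inter_subset_left hD) fun x hx =>
          mk_mem_prod (cot_sum_arccot_pos hs hx.1) hx.2
    have hset : {x : ι → ℝ | ∑ i ∈ Finset.cons a s ha, arccot (x i) < π / 2} =
        {x ∈ D | 0 < G x} := by
      ext x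
      exact sum_cons_arccot_lt_pi_div_two_iff hs ha x
    rw [hset]
    exact (hG.subset (sep_subset D _) (hG.convex_gt 0)).congr fun x hx =>
      (cot_sum_cons_arccot hs ha hx.1.1).symm

end

theorem stmt9 (n : ℕ) :
    ConcaveOn ℝ {lam : Fin n → ℝ | 0 < ∑ i, arccot (lam i) ∧ ∑ i, arccot (lam i) < π / 2}
      (fun lam => Real.cot (∑ i, arccot (lam i))) := by
  rcases (Finset.univ : Finset (Fin n)).eq_empty_or_nonempty with h | h
  · simp only [h, Finset.sum_empty, lt_self_iff_false, false_and, ofPred_false]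
    exact ⟨convex_empty, fun _ hx => hx.elim⟩
  · have hpos : ∀ lam : Fin n → ℝ, 0 < ∑ i, arccot (lam i) := sum_arccot_pos h
    simpa only [hpos, true_and] using concaveOn_cot_sum_arccot h
end

section
/- Let S: [0,∞) → [0,∞) be C¹ with ∫₀^∞ S(t) dt < ∞, and suppose S′(t) ≤ C(S(t) + √S(t)) for all t and some constant C > 0. Then S(t) → 0 as t → ∞. -/
/-!
Since `√S ≤ S + 1`, Grönwall turns `S' ≤ 2C (S + 1)` into `S t + 1 ≤ e^{2C (t - s)} (S s + 1)` for `s ≤ t`, so `S`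
stays below `ε` on a window of fixed length `δ` after any point where it is below a suitable
`η`. Integrability forces the integral of `S` over `[t - δ, t]` to vanish as `t → ∞`, so every
such window eventually contains a point where `S < η`.
-/

open Real Filter Set MeasureTheory Topology

theorem gronwallBound_self (δ K x : ℝ) :
    gronwallBound δ K K x = (δ + 1) * exp (K * x) - 1 := by
  by_cases hK : K = 0
  · simp [gronwallBound_K0, hK]
  · rw [gronwallBound_of_K_ne_0 hK, div_self hK]
    ring

theorem add_one_le_exp_mul_add_one_of_deriv_right_le {f f' : ℝ → ℝ} {K a b : ℝ}
    (hf : ContinuousOn f (Icc a b)) (hf' : ∀ x ∈ Ico a b, HasDerivWithinAt f (f' x) (Ici x) x)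
    (bound : ∀ x ∈ Ico a b, f' x ≤ K * (f x + 1)) (hab : a ≤ b) :
    f b + 1 ≤ exp (K * (b - a)) * (f a + 1) := by
  have h := le_gronwallBound_of_liminf_deriv_right_le (ε := K) hf
    (fun x hx _ hr => (hf' x hx).liminf_right_slope_le hr) le_rfl
    (fun x hx => (bound x hx).trans_eq (mul_add_one K (f x))) b ⟨hab, le_rfl⟩
  rw [gronwallBound_self] at h
  linarith

theorem MeasureTheory.IntegrableOn.intervalIntegrable_of_Ici {E : Type*} [NormedAddCommGroup E]
    {μ : Measure ℝ} {f : ℝ → E} {a b c : ℝ} (hf : IntegrableOn f (Ici a) μ) (hb : a ≤ b)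
    (hc : a ≤ c) : IntervalIntegrable f μ b c :=
  (hf.mono_set fun _ hx => (le_min hb hc).trans hx.1).intervalIntegrable

theorem MeasureTheory.IntegrableOn.tendsto_intervalIntegral_sub_self_atTop {E : Type*}
    [NormedAddCommGroup E] [NormedSpace ℝ E] {μ : Measure ℝ} {f : ℝ → E} {a : ℝ}
    (hf : IntegrableOn f (Ici a) μ) (δ : ℝ) :
    Tendsto (fun t => ∫ x in (t - δ)..t, f x ∂μ) atTop (𝓝 0) := by
  have hIoi := hf.mono_set Ioi_subset_Ici_self
  have hlim := (intervalIntegral_tendsto_integral_Ioi a hIoi tendsto_id).sub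
    (intervalIntegral_tendsto_integral_Ioi a hIoi (tendsto_atTop_add_const_right atTop (-δ)
      tendsto_id))
  rw [sub_self] at hlim
  refine hlim.congr' ?_
  filter_upwards [eventually_ge_atTop (a + δ), eventually_ge_atTop a] with t htδ ht
  rw [id, ← sub_eq_add_neg]
  exact intervalIntegral.integral_interval_sub_left (hf.intervalIntegrable_of_Ici le_rfl ht)
    (hf.intervalIntegrable_of_Ici le_rfl (by linarith))

theorem MeasureTheory.IntegrableOn.eventually_exists_mem_Icc_lt {f : ℝ → ℝ} {a δ η : ℝ}
    (hf : IntegrableOn f (Ici a)) (hδ : 0 < δ) (hη : 0 < η) :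
    ∀ᶠ t in atTop, ∃ s ∈ Icc (t - δ) t, f s < η := by
  filter_upwards [(hf.tendsto_intervalIntegral_sub_self_atTop δ).eventually
    (gt_mem_nhds (mul_pos hη hδ)), eventually_ge_atTop (a + δ)] with t hsmall ht
  by_contra! hlarge
  have hmono := intervalIntegral.integral_mono_on (by linarith : t - δ ≤ t)
    intervalIntegrable_const (hf.intervalIntegrable_of_Ici (by linarith) (by linarith)) hlarge
  rw [intervalIntegral.integral_const, smul_eq_mul, sub_sub_cancel, mul_comm] at hmono
  linarith

theorem tendsto_zero_of_integrableOn_of_add_one_le_exp {f : ℝ → ℝ} {a K : ℝ} (hK : 0 < K)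
    (hf0 : ∀ t, a ≤ t → 0 ≤ f t) (hf : IntegrableOn f (Ici a))
    (hgrowth : ∀ s t, a ≤ s → s ≤ t → f t + 1 ≤ exp (K * (t - s)) * (f s + 1)) :
    Tendsto f atTop (𝓝 0) := by
  refine tendsto_order.2 ⟨fun ε hε => ?_, fun ε hε => ?_⟩
  · filter_upwards [eventually_ge_atTop a] with t ht using hε.trans_le (hf0 t ht)
  set δ := log (1 + ε / 2) / K
  set η := ε / (2 + ε)
  have hδ : 0 < δ := div_pos (log_pos (by linarith)) hK
  have hexpδ : exp (K * δ) = 1 + ε / 2 := by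
    rw [mul_div_cancel₀ _ hK.ne', exp_log (by linarith)]
  have hη : (1 + ε / 2) * (η + 1) = 1 + ε := by
    simp only [η]
    field_simp
    ring
  filter_upwards [hf.eventually_exists_mem_Icc_lt hδ (by positivity : 0 < η),
    eventually_ge_atTop (a + δ)] with t ⟨s, ⟨hts, hst⟩, hfs⟩ ht
  have has : a ≤ s := by linarith
  calc f t ≤ exp (K * (t - s)) * (f s + 1) - 1 := by linarith [hgrowth s t has hst]
    _ ≤ exp (K * δ) * (f s + 1) - 1 := by
      gcongr
      · linarith [hf0 s has]
      · linarith
    _ < (1 + ε / 2) * (η + 1) - 1 := by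
      rw [hexpδ]
      gcongr
    _ = ε := by linarith

theorem stmt14 (S : ℝ → ℝ) (C : ℝ) (hC : 0 < C)
    (hS0 : ∀ t, 0 ≤ t → 0 ≤ S t)
    (hS1 : ContDiffOn ℝ 1 S (Set.Ici 0))
    (hint : MeasureTheory.IntegrableOn S (Set.Ici 0))
    (hS' : ∀ t, 0 ≤ t → derivWithin S (Set.Ici 0) t ≤ C * (S t + Real.sqrt (S t))) :
    Tendsto S atTop (nhds 0) := by
  have hderiv : ∀ t, 0 ≤ t → HasDerivWithinAt S (derivWithin S (Ici 0) t) (Ici t) t :=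
    fun t ht => (hS1.differentiableOn one_ne_zero t ht).hasDerivWithinAt.mono (Ici_subset_Ici.2 ht)
  have hbound : ∀ t, 0 ≤ t → derivWithin S (Ici 0) t ≤ 2 * C * (S t + 1) := fun t ht => by
    have hsqrt : √(S t) ≤ S t + 1 := by nlinarith [sq_sqrt (hS0 t ht), sqrt_nonneg (S t)]
    nlinarith [hS' t ht, hS0 t ht]
  refine tendsto_zero_of_integrableOn_of_add_one_le_exp (K := 2 * C) (by positivity) hS0 hint
    fun s t hs hst => ?_
  exact add_one_le_exp_mul_add_one_of_deriv_right_le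
    (hS1.continuousOn.mono (Icc_subset_Ici_self.trans (Ici_subset_Ici.2 hs)))
    (fun x hx => hderiv x (hs.trans hx.1)) (fun x hx => hbound x (hs.trans hx.1)) hst
end

section
/- Let S: [0,∞) → [0,∞) satisfy √(S(t)) + 1 ≤ e^{C(t−s)}(√(S(s)) + 1) for all t > s ≥ 0 and ∫₀^∞ S(t)dt < ∞. Then for every ε > 0 there is T such that S(t) ≤ (√ε e^{Cε} + Cε e^{Cε})² for all t ≥ T; in particular lim_{t→∞} S(t) = 0. -/
open Real Filter

/-!
An integrable function cannot stay above `ε` on a whole window of length `ε` far out, so every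
late time `t` has a point `t'` with `t - ε < t' ≤ t` and `S t' ≤ ε`. The self-control inequality
carries this smallness forward from `t'` to `t`, with a loss of at most a factor `exp (C * ε)`.
-/

open MeasureTheory Set Topology

lemma Real.exp_sub_one_le_mul_exp (x : ℝ) : exp x - 1 ≤ x * exp x := by
  have h := mul_le_mul_of_nonneg_right (one_sub_le_exp_neg x) (exp_pos x).le
  rw [← exp_add, neg_add_cancel, exp_zero, sub_mul, one_mul] at h
  linarith

section WindowIntegral

variable {f : ℝ → ℝ} {a : ℝ}

lemma MeasureTheory.IntegrableOn.tendsto_intervalIntegral_window (hf : IntegrableOn f (Ioi a))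
    (ε : ℝ) : Tendsto (fun t ↦ ∫ x in (t - ε)..t, f x) atTop (𝓝 0) := by
  have hF := intervalIntegral_tendsto_integral_Ioi a hf tendsto_id
  have hF_shift := intervalIntegral_tendsto_integral_Ioi a hf
    (by simpa [sub_eq_add_neg] using tendsto_atTop_add_const_right atTop (-ε) tendsto_id :
      Tendsto (fun t : ℝ ↦ t - ε) atTop atTop)
  rw [← sub_self (∫ x in Ioi a, f x)]
  refine (hF.sub hF_shift).congr' ?_
  filter_upwards [eventually_ge_atTop (a + ε), eventually_ge_atTop a] with t hεt hat
  have hint : ∀ u, a ≤ u → IntervalIntegrable f volume a u := fun u hu ↦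
    (intervalIntegrable_iff_integrableOn_Ioc_of_le hu).2 (hf.mono_set Ioc_subset_Ioi_self)
  exact intervalIntegral.integral_interval_sub_left (hint t hat) (hint _ (by linarith))

lemma MeasureTheory.IntegrableOn.eventually_exists_mem_Ioc_le (hf : IntegrableOn f (Ioi a))
    {ε δ : ℝ} (hε : 0 < ε) (hδ : 0 < δ) :
    ∀ᶠ t in atTop, ∃ t' ∈ Ioc (t - ε) t, f t' ≤ δ := by
  filter_upwards [(hf.tendsto_intervalIntegral_window ε).eventually (gt_mem_nhds (mul_pos hε hδ)),
    eventually_ge_atTop (a + ε)] with t hsmall hat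
  have hvol : volume (Ioc (t - ε) t) = ENNReal.ofReal ε := by simp
  obtain ⟨t', ht', hle⟩ := exists_le_setAverage (s := Ioc (t - ε) t) (by simp [hε]) (by simp)
    (hf.mono_set fun x hx ↦ (by linarith [hx.1] : a < x))
  refine ⟨t', ht', hle.trans ?_⟩
  rw [setAverage_eq, measureReal_def, hvol, ENNReal.toReal_ofReal hε.le, smul_eq_mul,
    ← intervalIntegral.integral_of_le (by linarith), inv_mul_le_iff₀ hε]
  exact hsmall.le

end WindowIntegral

def ExpSelfControl (S : ℝ → ℝ) (C : ℝ) : Prop :=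
  ∀ s t : ℝ, 0 ≤ s → s < t → √(S t) + 1 ≤ exp (C * (t - s)) * (√(S s) + 1)

namespace ExpSelfControl

variable {S : ℝ → ℝ} {C : ℝ}

lemma sqrt_add_one_le (hS : ExpSelfControl S C) {s t : ℝ} (hs : 0 ≤ s) (hst : s ≤ t) :
    √(S t) + 1 ≤ exp (C * (t - s)) * (√(S s) + 1) := by
  rcases hst.lt_or_eq with hlt | rfl
  · exact hS s t hs hlt
  · simp

lemma le_sq_of_mem_Ioc (hS : ExpSelfControl S C) (hC : 0 ≤ C) {ε s t : ℝ} (hs : 0 ≤ s)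
    (hst : s ∈ Ioc (t - ε) t) (hSs : S s ≤ ε) :
    S t ≤ (√ε * exp (C * ε) + C * ε * exp (C * ε)) ^ 2 := by
  have hexp : exp (C * (t - s)) ≤ exp (C * ε) :=
    exp_le_exp.2 (mul_le_mul_of_nonneg_left (by linarith [hst.1]) hC)
  have hsqrt : √(S t) ≤ √ε * exp (C * ε) + C * ε * exp (C * ε) := calc
    √(S t) ≤ exp (C * (t - s)) * (√(S s) + 1) - 1 := by linarith [hS.sqrt_add_one_le hs hst.2]
    _ ≤ exp (C * ε) * (√ε + 1) - 1 := by gcongr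
    _ = √ε * exp (C * ε) + (exp (C * ε) - 1) := by ring
    _ ≤ √ε * exp (C * ε) + C * ε * exp (C * ε) := by gcongr; exact exp_sub_one_le_mul_exp _
  calc S t ≤ √(S t) ^ 2 := by rw [sq_sqrt']; exact le_max_left _ _
    _ ≤ _ := by gcongr

end ExpSelfControl

lemma tendsto_zero_of_forall_eventually_le {α : Type*} {l : Filter α} {f : α → ℝ} {g : ℝ → ℝ}
    (hg : Tendsto g (𝓝[>] 0) (𝓝 0)) (hf₀ : ∀ᶠ x in l, 0 ≤ f x)
    (hfg : ∀ ε > 0, ∀ᶠ x in l, f x ≤ g ε) : Tendsto f l (𝓝 0) := by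
  refine tendsto_order.2 ⟨fun a ha ↦ hf₀.mono fun x hx ↦ ha.trans_le hx, fun b hb ↦ ?_⟩
  obtain ⟨ε, hεb, hε⟩ := ((hg.eventually (gt_mem_nhds hb)).and self_mem_nhdsWithin).exists
  exact (hfg ε hε).mono fun x hx ↦ hx.trans_lt hεb

theorem stmt15 (S : ℝ → ℝ) (C : ℝ) (hC : 0 < C)
    (hS0 : ∀ t, 0 ≤ t → 0 ≤ S t)
    (hctrl : ∀ s t : ℝ, 0 ≤ s → s < t →
      Real.sqrt (S t) + 1 ≤ Real.exp (C * (t - s)) * (Real.sqrt (S s) + 1))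
    (hint : MeasureTheory.IntegrableOn S (Set.Ici 0)) :
    (∀ ε > 0, ∃ T : ℝ, ∀ t ≥ T,
        S t ≤ (Real.sqrt ε * Real.exp (C * ε) + C * ε * Real.exp (C * ε)) ^ 2) ∧
      Tendsto S atTop (nhds 0) := by
  have hint' : IntegrableOn S (Ioi 0) := hint.mono_set Ioi_subset_Ici_self
  have hbound : ∀ ε > 0, ∀ᶠ t in atTop,
      S t ≤ (√ε * exp (C * ε) + C * ε * exp (C * ε)) ^ 2 := fun ε hε ↦ by
    filter_upwards [hint'.eventually_exists_mem_Ioc_le hε hε, eventually_ge_atTop ε]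
      with t ⟨t', ht', hSt'⟩ hεt
    exact ExpSelfControl.le_sq_of_mem_Ioc hctrl hC.le (by linarith [ht'.1]) ht' hSt'
  refine ⟨fun ε hε ↦ (hbound ε hε).exists_forall_of_atTop, ?_⟩
  have hg : Tendsto (fun ε ↦ (√ε * exp (C * ε) + C * ε * exp (C * ε)) ^ 2) (𝓝[>] 0) (𝓝 0) := by
    have hcont : Continuous fun ε ↦ (√ε * exp (C * ε) + C * ε * exp (C * ε)) ^ 2 := by fun_prop
    simpa using (hcont.tendsto 0).mono_left nhdsWithin_le_nhds
  exact tendsto_zero_of_forall_eventually_le hg ((eventually_ge_atTop 0).mono hS0) hbound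
end

section
/- For a Hermitian matrix H with eigenvalue vector λ ∈ Γ = {λ : 0 < Σᵢ arccot λᵢ < π/2}, one has Re det(H + iI)/Im det(H + iI) = cot(Σᵢ arccot λᵢ), and Im det(H + iI) > 0. -/
/-! `det (H + i)` is the product of the numbers `λ + i` over the eigenvalues of `H`, and each of
these has modulus `√(1 + λ²)` and argument `arccot λ ∈ (0, π)`. Hence `det (H + i) = R e^{iΘ}`
with `R > 0` and `Θ = ∑ arccot λᵢ`, so its real and imaginary parts are `R cos Θ` and `R sin Θ`;
on `Γ`, `sin Θ > 0`. -/

open Real Matrix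

open Polynomial in
theorem Matrix.IsHermitian.det_add_smul_one {𝕜 n : Type*} [RCLike 𝕜] [Fintype n] [DecidableEq n]
    {A : Matrix n n 𝕜} (hA : A.IsHermitian) (c : 𝕜) :
    det (A + c • 1) = ∏ i, ((hA.eigenvalues i : 𝕜) + c) := by
  -- `det (A + c) = (-1)ⁿ χ_A (-c)`
  have hcharpoly := congrArg (eval (-c)) hA.charpoly_eq
  rw [eval_charpoly, eval_prod] at hcharpoly
  have hneg : A + c • 1 = -(scalar n (-c) - A) := by
    rw [neg_sub, scalar_apply, ← smul_one_eq_diagonal, neg_smul, sub_neg_eq_add]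
  rw [hneg, det_neg, hcharpoly, ← Finset.card_univ, ← Finset.prod_const, ← Finset.prod_mul_distrib]
  simp

theorem cos_arccot_s19 (x : ℝ) : cos (arccot x) = x / √(1 + x ^ 2) := by
  rw [arccot, cos_pi_div_two_sub, sin_arctan]

theorem sin_arccot_s19 (x : ℝ) : sin (arccot x) = 1 / √(1 + x ^ 2) := by
  rw [arccot, sin_pi_div_two_sub, cos_arctan]

theorem ofReal_add_I_eq_sqrt_mul_exp_arccot (x : ℝ) :
    (x : ℂ) + Complex.I = √(1 + x ^ 2) * Complex.exp (arccot x * Complex.I) := by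
  have hs : (√(1 + x ^ 2) : ℂ) ≠ 0 := by exact_mod_cast (Real.sqrt_pos.2 (by positivity)).ne'
  rw [Complex.exp_mul_I, ← Complex.ofReal_cos, ← Complex.ofReal_sin, cos_arccot_s19, sin_arccot_s19]
  push_cast
  field_simp

theorem Complex.re_div_im_ofReal_mul_exp_mul_I {r : ℝ} (hr : r ≠ 0) (θ : ℝ) :
    (r * exp (θ * I)).re / (r * exp (θ * I)).im = Real.cot θ := by
  rw [re_ofReal_mul, im_ofReal_mul, exp_ofReal_mul_I_re, exp_ofReal_mul_I_im,
    mul_div_mul_left _ _ hr, Real.cot_eq_cos_div_sin]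

theorem prod_ofReal_add_I {ι : Type*} [Fintype ι] (x : ι → ℝ) :
    ∏ i, ((x i : ℂ) + Complex.I) =
      ((∏ i, √(1 + x i ^ 2) : ℝ) : ℂ) * Complex.exp ((∑ i, arccot (x i) : ℝ) * Complex.I) := by
  simp_rw [ofReal_add_I_eq_sqrt_mul_exp_arccot, Finset.prod_mul_distrib, ← Complex.exp_sum,
    ← Finset.sum_mul]
  push_cast
  rfl

theorem stmt19 (n : ℕ) (H : Matrix (Fin n) (Fin n) ℂ) (hH : H.IsHermitian)
    (hΓ : 0 < ∑ i, arccot (hH.eigenvalues i) ∧ ∑ i, arccot (hH.eigenvalues i) < π / 2) :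
    0 < (det (H + Complex.I • (1 : Matrix (Fin n) (Fin n) ℂ))).im ∧
      (det (H + Complex.I • (1 : Matrix (Fin n) (Fin n) ℂ))).re /
          (det (H + Complex.I • (1 : Matrix (Fin n) (Fin n) ℂ))).im =
        Real.cot (∑ i, arccot (hH.eigenvalues i)) := by
  set Θ := ∑ i, arccot (hH.eigenvalues i)
  set R := ∏ i, √(1 + hH.eigenvalues i ^ 2)
  have hdet : det (H + Complex.I • 1) = R * Complex.exp (Θ * Complex.I) :=
    (hH.det_add_smul_one _).trans (prod_ofReal_add_I _)
  have hR : 0 < R := Finset.prod_pos fun i _ => Real.sqrt_pos.2 (by positivity)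
  have hsin : 0 < sin Θ := sin_pos_of_pos_of_lt_pi hΓ.1 (hΓ.2.trans (by linarith [pi_pos]))
  rw [hdet, Complex.re_div_im_ofReal_mul_exp_mul_I hR.ne', Complex.im_ofReal_mul,
    Complex.exp_ofReal_mul_I_im]
  exact ⟨mul_pos hR hsin, rfl⟩
end
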